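/- Let R be a random RR set with width w(R), and define κ(R) = 1 − (1 − w(R)/m)^k. Let S* be the (deduplicated) set of k i.i.d. nodes each sampled with probability proportional to in-degree, and let KPT = E[I(S*)] be its mean expected spread. Then KPT = n · E[κ(R)]. -/

import Mathlib

open MeasureTheory ProbabilityTheory
open scoped Classical

/-!
Condition on the percolated subgraph. A node `v` is reached from the heads of `k` i.i.d.
uniform edges iff one of these edges has its head in the reverse-reachable set of `v`, whose
width `w` is the number of such edges; this happens with probability `1 - (1 - w / m) ^ k`.
Summing over `v` (by double counting) and writing the sum as `n` times the average over a
uniform `v` gives the identity.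
-/

section

open Finset BigOperators

variable {α : Type*} [Fintype α]

theorem PMF.integral_uniformOfFintype [Nonempty α] [MeasurableSpace α]
    [MeasurableSingletonClass α] (f : α → ℝ) :
    ∫ a, f a ∂(PMF.uniformOfFintype α).toMeasure = 𝔼 a, f a := by
  simp [PMF.integral_eq_sum, Fintype.expect_eq_sum_div_card, mul_sum, div_eq_inv_mul]

theorem card_filter_forall_not_apply (k : ℕ) (p : α → Prop) :
    #{f : Fin k → α | ∀ i, ¬ p (f i)} = #{a | ¬ p a} ^ k := by
  rw [← Fintype.card_piFinset_const]
  congr 1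
  ext f
  simp [Fintype.mem_piFinset]

theorem card_filter_exists_apply_div [Nonempty α] (k : ℕ) (p : α → Prop) :
    (#{f : Fin k → α | ∃ i, p (f i)} : ℝ) / Fintype.card α ^ k
      = 1 - (1 - (#{a | p a} : ℝ) / Fintype.card α) ^ k := by
  have hcompl : (#{a | ¬ p a} : ℝ) = Fintype.card α - #{a | p a} := by
    rw [eq_sub_iff_add_eq', ← card_univ]
    exact_mod_cast card_filter_add_card_filter_not p
  have hmiss : (#{f : Fin k → α | ∃ i, p (f i)} : ℝ) = Fintype.card α ^ k - #{a | ¬ p a} ^ k := by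
    have hsplit := card_filter_add_card_filter_not (s := univ) (fun f : Fin k → α => ∃ i, p (f i))
    simp only [not_exists, card_filter_forall_not_apply, card_univ, Fintype.card_fun,
      Fintype.card_fin] at hsplit
    rw [eq_sub_iff_add_eq]
    exact_mod_cast hsplit
  have hα : (Fintype.card α : ℝ) ≠ 0 := by positivity
  rw [hmiss, hcompl, sub_div, div_self (pow_ne_zero k hα), ← div_pow, sub_div, div_self hα]

theorem expect_card_filter_exists [Nonempty α] {β : Type*} [Fintype β] (k : ℕ)
    (q : α → β → Prop) :
    𝔼 f : Fin k → α, (#{b | ∃ i, q (f i) b} : ℝ)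
      = ∑ b, (1 - (1 - (#{a | q a b} : ℝ) / Fintype.card α) ^ k) := by
  have hcount := sum_card_bipartiteAbove_eq_sum_card_bipartiteBelow
    (s := (univ : Finset (Fin k → α))) (t := (univ : Finset β)) (r := fun f b => ∃ i, q (f i) b)
  simp only [bipartiteAbove, bipartiteBelow] at hcount
  simp_rw [← card_filter_exists_apply_div, Fintype.expect_eq_sum_div_card, Fintype.card_fun,
    Fintype.card_fin, ← sum_div]
  exact_mod_cast congrArg (fun n : ℕ => (n : ℝ) / Fintype.card α ^ k) hcount

end

theorem kpt_eq_n_mul_expected_kappa_general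
    {V : Type*} [Fintype V] [Nonempty V] [MeasurableSpace V] [MeasurableSingletonClass V]
    (E : V → V → Prop) [DecidableRel E]
    [Nonempty {e : V × V // E e.1 e.2}]
    (k : ℕ)
    (m : ℕ) (hm : m = Fintype.card {e : V × V // E e.1 e.2})
    (μ : Measure (V → V → Bool)) [IsProbabilityMeasure μ] :
    ∫ x, ((Finset.univ.filter (fun w : V => ∃ i : Fin k,
          Relation.ReflTransGen (fun a b => E a b ∧ x.1 a b = true) ((x.2 i).val.2) w)).card : ℝ)
      ∂(μ.prod (PMF.uniformOfFintype (Fin k → {e : V × V // E e.1 e.2})).toMeasure)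
    = (Fintype.card V : ℝ) *
      ∫ x, (1 - (1 - ((Finset.univ.filter (fun e : {e : V × V // E e.1 e.2} =>
              Relation.ReflTransGen (fun a b => E a b ∧ x.1 a b = true) e.val.2 x.2)).card : ℝ)
            / m) ^ k)
        ∂(μ.prod (PMF.uniformOfFintype V).toMeasure) := by
  subst hm
  rw [integral_prod _ .of_finite, integral_prod _ .of_finite, ← integral_const_mul]
  refine integral_congr_ae (.of_forall fun g => ?_)
  simp only [PMF.integral_uniformOfFintype, Fintype.card_mul_expect]
  exact expect_card_filter_exists (α := {e : V × V // E e.1 e.2}) k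
    (fun e v => Relation.ReflTransGen (fun a b => E a b ∧ g a b = true) e.val.2 v)

/-- Lemma 6 of Tang–Xiao–Shi: `KPT = n · E[κ(R)]` where `κ(R) = 1 - (1 - w(R)/m)^k`.
Here a random RR set `R` is generated for a uniformly random node on an edge-percolated
subgraph of `G`; `w(R)` is the number of edges of `G` pointing into `R`; and `KPT = E[I(S*)]`
is the mean spread of the set `S*` formed by the heads of `k` i.i.d. uniformly random edges
(equivalently, `k` i.i.d. nodes sampled with probability proportional to in-degree), the
spread being the number of nodes reachable from `S*` in the percolated subgraph. -/
theorem kpt_eq_n_mul_expected_kappa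
    {V : Type*} [Fintype V] [Nonempty V] [MeasurableSpace V] [MeasurableSingletonClass V]
    (E : V → V → Prop) [DecidableRel E]
    [Nonempty {e : V × V // E e.1 e.2}]
    (k : ℕ) (hk : 1 ≤ k)
    (m : ℕ) (hm : m = Fintype.card {e : V × V // E e.1 e.2})
    (μ : Measure (V → V → Bool)) [IsProbabilityMeasure μ] :
    ∫ x, ((Finset.univ.filter (fun w : V => ∃ i : Fin k,
          Relation.ReflTransGen (fun a b => E a b ∧ x.1 a b = true) ((x.2 i).val.2) w)).card : ℝ)
      ∂(μ.prod (PMF.uniformOfFintype (Fin k → {e : V × V // E e.1 e.2})).toMeasure)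
    = (Fintype.card V : ℝ) *
      ∫ x, (1 - (1 - ((Finset.univ.filter (fun e : {e : V × V // E e.1 e.2} =>
              Relation.ReflTransGen (fun a b => E a b ∧ x.1 a b = true) e.val.2 x.2)).card : ℝ)
            / m) ^ k)
        ∂(μ.prod (PMF.uniformOfFintype V).toMeasure) :=
  kpt_eq_n_mul_expected_kappa_general E k m hm μ
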